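/- Suppose $A$ is a connection on a principal $G$-bundle over $W_3 = {\Bbb R}_y \times C$ ($C$ a Riemann surface) and $\upphi$ an adjoint-valued function satisfying the Bogomolny equations $F = \star\,{\mathrm d}_A \upphi$. Then the $(0,1)$ part of the covariant derivative along $C$ satisfies $[D_y - i\upphi, \overline\partial_A] = 0$; consequently the holomorphic structure induced by $\overline\partial_A$ on the restriction $E_y \to \{y\}\times C$ is independent of $y$ up to complex gauge transformation. -/

import Mathlib

/-!
STATEMENT 4.  Bogomolny equations on `W₃ = ℝ_y × C` (with `C = ℂ`, in a local
trivialization, the fields being matrix-valued, here valued in a normed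
`ℂ`-algebra `𝔄`) imply the operator identity `[D_y - iφ, ∂̄_A] = 0`, formalized as
the vanishing of the multiplication operator
`F_{y z̄} - i D_{z̄} φ = ∂_y A_{z̄} - ∂_{z̄} A_y + [A_y, A_{z̄}] - i (∂_{z̄} φ + [A_{z̄}, φ])`,
where `A_{z̄} = ½(A₁ + i A₂)` and `∂_{z̄} = ½(∂₁ + i ∂₂)`.  Consequently the
holomorphic structure `∂̄_A` on `E_y → {y} × C` is independent of `y` up to the
complex gauge transformation generated by `D_y - iφ`.

A point of `ℝ × ℂ` is `(y, z)` with `z = x₁ + i x₂`; `Dv v f` is the directional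
derivative along `v`. -/

noncomputable def Dv {𝔄 : Type*} [NormedRing 𝔄] [NormedAlgebra ℂ 𝔄]
    (v : ℝ × ℂ) (f : ℝ × ℂ → 𝔄) (x : ℝ × ℂ) : 𝔄 :=
  fderiv ℝ f x v

/-! Take `dz̄`-components of the first two Bogomolny equations
`(F_{y1}, F_{y2}) = (-D₂φ, D₁φ)`: the Hodge star of `C` acts on `(0,1)`-forms as
multiplication by `i`, so `F_{yz̄} = i D_{z̄}φ`, and `F_{yz̄} - i D_{z̄}φ` is the operator
`[D_y - iφ, ∂̄_A]`. -/

/-- The `dz̄`-component `½ (u + i v)` of a one-form on `C` with components `u`, `v`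
along `x₁`, `x₂`. -/
noncomputable def dbarComponent {M : Type*} [AddCommGroup M] [Module ℂ M] (u v : M) : M :=
  (2 : ℂ)⁻¹ • (u + Complex.I • v)

section dbarComponent

variable {M : Type*} [AddCommGroup M] [Module ℂ M]

theorem dbarComponent_add (u v u' v' : M) :
    dbarComponent (u + u') (v + v') = dbarComponent u v + dbarComponent u' v' := by
  simp only [dbarComponent]
  module

theorem dbarComponent_sub (u v u' v' : M) :
    dbarComponent (u - u') (v - v') = dbarComponent u v - dbarComponent u' v' := by
  simp only [dbarComponent]
  module

theorem dbarComponent_neg_swap (u v : M) :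
    dbarComponent (-v) u = Complex.I • dbarComponent u v := by
  have hI : Complex.I • Complex.I • v = -v := by
    rw [smul_smul, Complex.I_mul_I, neg_one_smul]
  simp only [dbarComponent, smul_add, smul_comm Complex.I (2 : ℂ)⁻¹, hI]
  module

end dbarComponent

section Lie

variable {A : Type*} [Ring A] [Algebra ℂ A]

theorem lie_dbarComponent (a u v : A) :
    ⁅a, dbarComponent u v⁆ = dbarComponent ⁅a, u⁆ ⁅a, v⁆ := by
  simp only [dbarComponent, Ring.lie_def, mul_add, add_mul, mul_smul_comm, smul_mul_assoc]
  module

theorem dbarComponent_lie (u v b : A) :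
    ⁅dbarComponent u v, b⁆ = dbarComponent ⁅u, b⁆ ⁅v, b⁆ := by
  simp only [dbarComponent, Ring.lie_def, mul_add, add_mul, mul_smul_comm, smul_mul_assoc]
  module

end Lie

theorem Dv_dbarComponent {𝔄 : Type*} [NormedRing 𝔄] [NormedAlgebra ℂ 𝔄]
    {f g : ℝ × ℂ → 𝔄} {x : ℝ × ℂ} (hf : DifferentiableAt ℝ f x)
    (hg : DifferentiableAt ℝ g x) (v : ℝ × ℂ) :
    Dv v (fun x => dbarComponent (f x) (g x)) x = dbarComponent (Dv v f x) (Dv v g x) := by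
  have hIg : DifferentiableAt ℝ (fun x => Complex.I • g x) x := hg.const_smul Complex.I
  simp only [Dv, dbarComponent]
  rw [fderiv_fun_const_smul (hf.fun_add hIg), fderiv_fun_add hf hIg, fderiv_fun_const_smul hg]
  rfl

theorem bogomolny_implies_dbar_commutes_general
    {𝔄 : Type*} [NormedRing 𝔄] [NormedAlgebra ℂ 𝔄]
    (Ay A1 A2 φ : ℝ × ℂ → 𝔄)
    (hA1 : Differentiable ℝ A1)
    (hA2 : Differentiable ℝ A2)
    -- the Bogomolny equations `F = ⋆ d_A φ` in components:
    -- `F_{y1} = -D₂φ`, `F_{y2} = D₁φ`, `F_{12} = D_y φ`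
    (h1 : ∀ x, Dv (1, 0) A1 x - Dv (0, 1) Ay x + ⁅Ay x, A1 x⁆
            = -(Dv (0, Complex.I) φ x + ⁅A2 x, φ x⁆))
    (h2 : ∀ x, Dv (1, 0) A2 x - Dv (0, Complex.I) Ay x + ⁅Ay x, A2 x⁆
            = Dv (0, 1) φ x + ⁅A1 x, φ x⁆) :
    letI Azb : ℝ × ℂ → 𝔄 := fun x => (2 : ℂ)⁻¹ • (A1 x + Complex.I • A2 x)
    ∀ x, Dv (1, 0) Azb x - ((2 : ℂ)⁻¹ • (Dv (0, 1) Ay x + Complex.I • Dv (0, Complex.I) Ay x))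
          + ⁅Ay x, Azb x⁆
          - Complex.I • ((2 : ℂ)⁻¹ • (Dv (0, 1) φ x + Complex.I • Dv (0, Complex.I) φ x)
              + ⁅Azb x, φ x⁆) = 0 := by
  intro x
  simp only [← dbarComponent.eq_1]
  have curvature_dbar :
      Dv (1, 0) (fun x => dbarComponent (A1 x) (A2 x)) x
          - dbarComponent (Dv (0, 1) Ay x) (Dv (0, Complex.I) Ay x)
          + ⁅Ay x, dbarComponent (A1 x) (A2 x)⁆
        = dbarComponent (Dv (1, 0) A1 x - Dv (0, 1) Ay x + ⁅Ay x, A1 x⁆)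
            (Dv (1, 0) A2 x - Dv (0, Complex.I) Ay x + ⁅Ay x, A2 x⁆) := by
    rw [Dv_dbarComponent (hA1 x) (hA2 x), lie_dbarComponent, ← dbarComponent_sub,
      ← dbarComponent_add]
  have covariant_dbar :
      dbarComponent (Dv (0, 1) φ x) (Dv (0, Complex.I) φ x)
          + ⁅dbarComponent (A1 x) (A2 x), φ x⁆
        = dbarComponent (Dv (0, 1) φ x + ⁅A1 x, φ x⁆)
            (Dv (0, Complex.I) φ x + ⁅A2 x, φ x⁆) := by
    rw [dbarComponent_lie, dbarComponent_add]
  rw [curvature_dbar, covariant_dbar, h1, h2, dbarComponent_neg_swap, sub_self]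

theorem bogomolny_implies_dbar_commutes
    {𝔄 : Type*} [NormedRing 𝔄] [NormedAlgebra ℂ 𝔄]
    (Ay A1 A2 φ : ℝ × ℂ → 𝔄)
    (hAy : Differentiable ℝ Ay) (hA1 : Differentiable ℝ A1)
    (hA2 : Differentiable ℝ A2) (hφ : Differentiable ℝ φ)
    -- the Bogomolny equations `F = ⋆ d_A φ` in components:
    -- `F_{y1} = -D₂φ`, `F_{y2} = D₁φ`, `F_{12} = D_y φ`
    (h1 : ∀ x, Dv (1, 0) A1 x - Dv (0, 1) Ay x + ⁅Ay x, A1 x⁆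
            = -(Dv (0, Complex.I) φ x + ⁅A2 x, φ x⁆))
    (h2 : ∀ x, Dv (1, 0) A2 x - Dv (0, Complex.I) Ay x + ⁅Ay x, A2 x⁆
            = Dv (0, 1) φ x + ⁅A1 x, φ x⁆)
    (h3 : ∀ x, Dv (0, 1) A2 x - Dv (0, Complex.I) A1 x + ⁅A1 x, A2 x⁆
            = Dv (1, 0) φ x + ⁅Ay x, φ x⁆) :
    letI Azb : ℝ × ℂ → 𝔄 := fun x => (2 : ℂ)⁻¹ • (A1 x + Complex.I • A2 x)
    ∀ x, Dv (1, 0) Azb x - ((2 : ℂ)⁻¹ • (Dv (0, 1) Ay x + Complex.I • Dv (0, Complex.I) Ay x))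
          + ⁅Ay x, Azb x⁆
          - Complex.I • ((2 : ℂ)⁻¹ • (Dv (0, 1) φ x + Complex.I • Dv (0, Complex.I) φ x)
              + ⁅Azb x, φ x⁆) = 0 :=
  bogomolny_implies_dbar_commutes_general Ay A1 A2 φ hA1 hA2 h1 h2
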